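/- arXiv:math/0608051 — 2 statements merged into one kernel-verified Lean document; each statement's English description precedes it below -/
import Mathlib

section
/- Let d ≥ 1, B ≥ 0, and let φ : ℝ^d → ℝ be Borel measurable with φ(u) ≥ -2B for all u and with u ↦ e^{-φ(u)} - 1 Lebesgue integrable on ℝ^d. Then for every m ≥ 1 and all points x₁, …, x_m ∈ ℝ^d, ∫_{ℝ^d} |exp(-∑_{i=1}^m φ(u - x_i)) - 1| du ≤ (∑_{j=0}^{m-1} e^{2jB}) · ∫_{ℝ^d} |e^{-φ(u)} - 1| du. -/
/-!
Write `exp (-∑ᵢ φ (u - xᵢ)) = ∏ᵢ aᵢ` with `aᵢ = exp (-φ (u - xᵢ)) ∈ [0, e^{2B}]`. Telescoping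
`a₀ ⋯ aₙ - 1 = (a₀ - 1) + a₀ (a₁ ⋯ aₙ - 1)` bounds `|∏ᵢ aᵢ - 1|` by `∑ᵢ e^{2iB} |aᵢ - 1|`,
and each term integrates to `e^{2iB} ∫ |e^{-φ} - 1|` by translation invariance of Lebesgue measure.
-/

open MeasureTheory

theorem abs_prod_sub_one_le_sum_pow_mul {n : ℕ} {C : ℝ} (a : Fin n → ℝ)
    (ha₀ : ∀ i, 0 ≤ a i) (haC : ∀ i, a i ≤ C) :
    |∏ i, a i - 1| ≤ ∑ i : Fin n, C ^ (i : ℕ) * |a i - 1| := by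
  induction n with
  | zero => simp
  | succ n ih =>
    have hC : 0 ≤ C := (ha₀ 0).trans (haC 0)
    have ih' := ih (fun i => a i.succ) (fun i => ha₀ _) (fun i => haC _)
    rw [Fin.prod_univ_succ, Fin.sum_univ_succ]
    calc |a 0 * ∏ i : Fin n, a i.succ - 1|
        = |(a 0 - 1) + a 0 * (∏ i : Fin n, a i.succ - 1)| := by ring_nf
      _ ≤ |a 0 - 1| + a 0 * |∏ i : Fin n, a i.succ - 1| := by
          rw [← abs_of_nonneg (ha₀ 0), ← abs_mul, abs_of_nonneg (ha₀ 0)]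
          exact abs_add_le _ _
      _ ≤ |a 0 - 1| + C * ∑ i : Fin n, C ^ (i : ℕ) * |a i.succ - 1| := by
          gcongr
          exact haC 0
      _ = C ^ ((0 : Fin (n + 1)) : ℕ) * |a 0 - 1| +
            ∑ i : Fin n, C ^ (i.succ : ℕ) * |a i.succ - 1| := by
          simp only [Fin.val_zero, Fin.val_succ, pow_zero, one_mul, pow_succ, Finset.mul_sum]
          congr 1
          exact Finset.sum_congr rfl fun i _ => by ring

theorem abs_exp_neg_sum_sub_one_le {n : ℕ} {c : ℝ} (b : Fin n → ℝ) (hb : ∀ i, -c ≤ b i) :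
    |Real.exp (-∑ i, b i) - 1| ≤ ∑ i : Fin n, Real.exp c ^ (i : ℕ) * |Real.exp (-b i) - 1| := by
  rw [← Finset.sum_neg_distrib, Real.exp_sum]
  exact abs_prod_sub_one_le_sum_pow_mul _ (fun i => (Real.exp_pos _).le)
    (fun i => Real.exp_le_exp.2 (by linarith [hb i]))

theorem lintegral_ofReal_sum_mul_abs_comp_sub {G ι : Type*} [MeasurableSpace G] [AddGroup G]
    [MeasurableAdd G] {μ : Measure G} [μ.IsAddRightInvariant] (s : Finset ι) {c : ι → ℝ}
    (hc : ∀ i, 0 ≤ c i) (x : ι → G) {g : G → ℝ} (hg : Integrable g μ) :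
    ∫⁻ u, ENNReal.ofReal (∑ i ∈ s, c i * |g (u - x i)|) ∂μ =
      ENNReal.ofReal ((∑ i ∈ s, c i) * ∫ u, |g u| ∂μ) := by
  have hint : ∀ i ∈ s, Integrable (fun u => c i * |g (u - x i)|) μ :=
    fun i _ => ((hg.comp_sub_right (x i)).abs).const_mul (c i)
  rw [← ofReal_integral_eq_lintegral_ofReal (integrable_finsetSum s hint)
    (Filter.Eventually.of_forall fun u =>
      Finset.sum_nonneg fun i _ => mul_nonneg (hc i) (abs_nonneg _)),
    integral_finsetSum s hint, Finset.sum_mul]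
  simp only [integral_const_mul, integral_sub_right_eq_self (fun u => |g u|)]

theorem stmt2_general (d : ℕ) (B : ℝ)
    (φ : EuclideanSpace ℝ (Fin d) → ℝ)
    (hlb : ∀ u, -2 * B ≤ φ u)
    (hint : Integrable (fun u => Real.exp (-φ u) - 1))
    (m : ℕ) (x : Fin m → EuclideanSpace ℝ (Fin d)) :
    ∫⁻ u, ENNReal.ofReal |Real.exp (-∑ i, φ (u - x i)) - 1| ≤
      ENNReal.ofReal ((∑ j ∈ Finset.range m, Real.exp (2 * j * B)) *
        ∫ u, |Real.exp (-φ u) - 1|) := by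
  have hweights : ∑ i : Fin m, Real.exp (2 * B) ^ (i : ℕ) =
      ∑ j ∈ Finset.range m, Real.exp (2 * j * B) := by
    rw [Fin.sum_univ_eq_sum_range (fun j => Real.exp (2 * B) ^ j)]
    exact Finset.sum_congr rfl fun j _ => by rw [← Real.exp_nat_mul]; ring_nf
  calc ∫⁻ u, ENNReal.ofReal |Real.exp (-∑ i, φ (u - x i)) - 1|
      ≤ ∫⁻ u, ENNReal.ofReal
          (∑ i : Fin m, Real.exp (2 * B) ^ (i : ℕ) * |Real.exp (-φ (u - x i)) - 1|) :=
        lintegral_mono fun u => ENNReal.ofReal_le_ofReal <|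
          abs_exp_neg_sum_sub_one_le _ fun i => by linarith [hlb (u - x i)]
    _ = _ := by
        rw [lintegral_ofReal_sum_mul_abs_comp_sub _ (fun i => by positivity) x hint, hweights]

/-- For a pair potential `φ` bounded below by `-2B` with `e^{-φ} - 1` integrable,
and any points `x₁, …, x_m`, one has
`∫ |exp(-∑ᵢ φ(u - xᵢ)) - 1| du ≤ (∑_{j=0}^{m-1} e^{2jB}) ∫ |e^{-φ(u)} - 1| du`. -/
theorem stmt2 (d : ℕ) (hd : 1 ≤ d) (B : ℝ) (hB : 0 ≤ B)
    (φ : EuclideanSpace ℝ (Fin d) → ℝ) (hmeas : Measurable φ)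
    (hlb : ∀ u, -2 * B ≤ φ u)
    (hint : Integrable (fun u => Real.exp (-φ u) - 1))
    (m : ℕ) (hm : 1 ≤ m) (x : Fin m → EuclideanSpace ℝ (Fin d)) :
    ∫⁻ u, ENNReal.ofReal |Real.exp (-∑ i, φ (u - x i)) - 1| ≤
      ENNReal.ofReal ((∑ j ∈ Finset.range m, Real.exp (2 * j * B)) *
        ∫ u, |Real.exp (-φ u) - 1|) :=
  stmt2_general d B φ hlb hint m x
end

section
/- Let d ≥ 1 and let φ : ℝ^d → ℝ be Borel measurable such that u ↦ e^{-φ(u)} - 1 is Lebesgue integrable on ℝ^d. Then for every δ > 0 and every R > 0, the Lebesgue measure of the set {u ∈ ℝ^d : ‖u‖ ≤ R and |φ(u + z)| ≥ δ} tends to 0 as ‖z‖ → ∞. -/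
/-!
Put `g = e^{-φ} - 1`. Where `|φ| ≥ δ` we have `|g| ≥ 1 - e^{-δ} > 0`, so by translation invariance
and Markov's inequality the measure in question is at most `(1 - e^{-δ})⁻¹ ∫_{B(z, R)} |g|`.
Since `|g|` is integrable, its integral over a ball of fixed radius tends to `0` as the centre
escapes to infinity.
-/

open MeasureTheory Filter Metric Bornology
open scoped Topology ENNReal

lemma one_sub_exp_neg_le_abs_exp_neg_sub_one {δ x : ℝ} (h : δ ≤ |x|) :
    1 - Real.exp (-δ) ≤ |Real.exp (-x) - 1| := by
  rcases le_abs.1 h with hx | hx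
  · have : Real.exp (-x) ≤ Real.exp (-δ) := Real.exp_le_exp.2 (by linarith)
    rw [abs_sub_comm]
    exact (sub_le_sub_left this 1).trans (le_abs_self _)
  · have hexp : Real.exp δ ≤ Real.exp (-x) := Real.exp_le_exp.2 (by linarith)
    have hcosh : 2 ≤ Real.exp δ + Real.exp (-δ) := by
      nlinarith [Real.add_one_le_exp δ, Real.add_one_le_exp (-δ)]
    exact le_trans (by linarith) (le_abs_self _)

section FiniteMeasure

variable {α : Type*} [PseudoMetricSpace α] [MeasurableSpace α] [OpensMeasurableSpace α]
  (ν : Measure α) [IsFiniteMeasure ν]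

lemma tendsto_measure_compl_closedBall_atTop (x : α) :
    Tendsto (fun r : ℝ => ν (closedBall x r)ᶜ) atTop (𝓝 0) := by
  have hempty : ⋂ r : ℝ, (closedBall x r)ᶜ = ∅ :=
    Set.iInter_eq_empty_iff.2 fun y => ⟨dist y x, by simp⟩
  simpa [Function.comp_def, hempty] using
    tendsto_measure_iInter_atTop (μ := ν) (s := fun r => (closedBall x r)ᶜ)
      (fun r => measurableSet_closedBall.compl.nullMeasurableSet)
      (fun r s hrs => Set.compl_subset_compl.2 (closedBall_subset_closedBall hrs))
      ⟨0, measure_ne_top ν _⟩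

lemma tendsto_measure_closedBall_cobounded (R : ℝ) :
    Tendsto (fun z => ν (closedBall z R)) (cobounded α) (𝓝 0) := by
  rw [ENNReal.tendsto_nhds_zero]
  intro ε hε
  rcases isEmpty_or_nonempty α with _ | ⟨⟨x⟩⟩
  · exact .of_forall isEmptyElim
  obtain ⟨r, hr⟩ := ((ENNReal.tendsto_nhds_zero.1 (tendsto_measure_compl_closedBall_atTop ν x))
    ε hε).exists
  filter_upwards [(hasBasis_cobounded_compl_closedBall x).mem_of_mem (i := r + R) trivial]
    with z hz
  refine le_trans (measure_mono ?_) hr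
  refine Set.subset_compl_iff_disjoint_left.2 (closedBall_disjoint_closedBall ?_)
  simpa [dist_comm] using hz

end FiniteMeasure

lemma MeasureTheory.Integrable.tendsto_setLIntegral_closedBall_cobounded {α E : Type*}
    [PseudoMetricSpace α] [MeasurableSpace α] [OpensMeasurableSpace α] [NormedAddCommGroup E]
    {μ : Measure α} {f : α → E} (hf : Integrable f μ) (R : ℝ) :
    Tendsto (fun z => ∫⁻ x in closedBall z R, ‖f x‖ₑ ∂μ) (cobounded α) (𝓝 0) := by
  have : IsFiniteMeasure (μ.withDensity fun x => ‖f x‖ₑ) :=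
    isFiniteMeasure_withDensity hf.hasFiniteIntegral.ne
  simpa [withDensity_apply _ measurableSet_closedBall] using
    tendsto_measure_closedBall_cobounded (μ.withDensity fun x => ‖f x‖ₑ) R

lemma measure_norm_le_and_le_add_le_setLIntegral_div {G : Type*} [NormedAddCommGroup G]
    [MeasurableSpace G] [OpensMeasurableSpace G] [MeasurableAdd G] (μ : Measure G)
    [μ.IsAddRightInvariant] {f : G → ℝ≥0∞} (hf : AEMeasurable f μ) {c : ℝ≥0∞} (hc : c ≠ 0)
    (hc' : c ≠ ⊤) (z : G) (R : ℝ) :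
    μ {u | ‖u‖ ≤ R ∧ c ≤ f (u + z)} ≤ (∫⁻ v in closedBall z R, f v ∂μ) / c := by
  have htranslate :
      {u | ‖u‖ ≤ R ∧ c ≤ f (u + z)} = (· + z) ⁻¹' ({v | c ≤ f v} ∩ closedBall z R) := by
    ext u
    simp [and_comm]
  rw [htranslate, measure_preimage_add_right, ← Measure.restrict_apply' measurableSet_closedBall]
  exact meas_ge_le_lintegral_div hf.restrict hc hc'

theorem stmt5_general (d : ℕ)
    (φ : EuclideanSpace ℝ (Fin d) → ℝ)
    (hint : Integrable (fun u => Real.exp (-φ u) - 1))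
    (δ R : ℝ) (hδ : 0 < δ) :
    Tendsto (fun z : EuclideanSpace ℝ (Fin d) =>
        volume {u : EuclideanSpace ℝ (Fin d) | ‖u‖ ≤ R ∧ δ ≤ |φ (u + z)|})
      (Bornology.cobounded (EuclideanSpace ℝ (Fin d))) (nhds 0) := by
  set c := ENNReal.ofReal (1 - Real.exp (-δ))
  have hc : c ≠ 0 := by simpa [c] using hδ
  have hsub : ∀ z, {u : EuclideanSpace ℝ (Fin d) | ‖u‖ ≤ R ∧ δ ≤ |φ (u + z)|} ⊆
      {u | ‖u‖ ≤ R ∧ c ≤ ‖Real.exp (-φ (u + z)) - 1‖ₑ} := fun z u ⟨hu, hφ⟩ =>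
    ⟨hu, by
      rw [← ofReal_norm, Real.norm_eq_abs]
      exact ENNReal.ofReal_le_ofReal (one_sub_exp_neg_le_abs_exp_neg_sub_one hφ)⟩
  have hbound := fun z : EuclideanSpace ℝ (Fin d) => (measure_mono (hsub z)).trans
    (measure_norm_le_and_le_add_le_setLIntegral_div volume hint.aestronglyMeasurable.enorm hc
      ENNReal.ofReal_ne_top z R)
  refine tendsto_of_tendsto_of_tendsto_of_le_of_le tendsto_const_nhds ?_ (fun _ => zero_le) hbound
  simpa using ENNReal.Tendsto.div_const (hint.tendsto_setLIntegral_closedBall_cobounded R) (.inr hc)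

/-- If `e^{-φ} - 1` is Lebesgue integrable on `ℝ^d`, then for every `δ > 0` and `R > 0`
the Lebesgue measure of `{u : ‖u‖ ≤ R, |φ(u + z)| ≥ δ}` tends to `0` as `‖z‖ → ∞`,
i.e. along the filter of complements of bounded sets. -/
theorem stmt5 (d : ℕ) (hd : 1 ≤ d)
    (φ : EuclideanSpace ℝ (Fin d) → ℝ) (hmeas : Measurable φ)
    (hint : Integrable (fun u => Real.exp (-φ u) - 1))
    (δ R : ℝ) (hδ : 0 < δ) (hR : 0 < R) :
    Tendsto (fun z : EuclideanSpace ℝ (Fin d) =>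
        volume {u : EuclideanSpace ℝ (Fin d) | ‖u‖ ≤ R ∧ δ ≤ |φ (u + z)|})
      (Bornology.cobounded (EuclideanSpace ℝ (Fin d))) (nhds 0) :=
  stmt5_general d φ hint δ R hδ
end
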